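/- Let ε > 0 and let u be a classical solution of the ε-regularized flow on [0,T]. Then for every t ∈ [0,T], ∫_Ω u(t,x)² dx = ∫_Ω u(0,x)² dx − 2ε ∫_0^t μ_ε[u(s,·)] ds. -/

import Mathlib

/-!
Differentiating under the integral sign,
`d/dt ∫_Ω u² = 2 ∫_Ω u ∂ₜu = 2 ∫_Ω u Δu - 2ω ∫_Ω u² + 2 μ_ε[u] ∫_Ω |u|^(2σ+2)`.
As `u` vanishes on `∂Ω`, Green's identity gives `∫_Ω u Δu = -∫_Ω |∇u|²`, and by the definition of
`μ_ε` the right-hand side collapses to `-2ε μ_ε[u]`; integrating in time gives the identity.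

Green's identity is proved one coordinate direction at a time: `(∂ᵢu)² + u ∂ᵢ²u = ∂ᵢ(u ∂ᵢu)`, and
by Fubini the integral over the ball of the `i`-th partial derivative of a function vanishing on
the sphere is an integral of integrals over chords in direction `eᵢ`, each zero by the
fundamental theorem of calculus.
-/

open MeasureTheory Set Filter

noncomputable section

/-- The domain: open ball of radius `R` in `ℝ^d`. -/
def Om (d : ℕ) (R : ℝ) : Set (EuclideanSpace ℝ (Fin d)) := Metric.ball 0 R

/-- Laplacian as the sum of second directional derivatives along the standard basis. -/
def lapl {d : ℕ} (w : EuclideanSpace ℝ (Fin d) → ℝ) (x : EuclideanSpace ℝ (Fin d)) : ℝ :=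
  ∑ i : Fin d, fderiv ℝ (fun y => fderiv ℝ w y (EuclideanSpace.single i 1)) x
    (EuclideanSpace.single i 1)

/-- The nonlocal coefficient `μ[w]` over a region `Ω`. -/
def muF {d : ℕ} (Ω : Set (EuclideanSpace ℝ (Fin d))) (σ ω : ℝ)
    (w : EuclideanSpace ℝ (Fin d) → ℝ) : ℝ :=
  ((∫ x in Ω, ‖fderiv ℝ w x‖ ^ 2) + ω * ∫ x in Ω, (w x) ^ 2) /
    ∫ x in Ω, |w x| ^ (2 * σ + 2)

/-- The functional `F[w]` over a region `Ω`. -/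
def FF {d : ℕ} (Ω : Set (EuclideanSpace ℝ (Fin d))) (σ ω : ℝ)
    (w : EuclideanSpace ℝ (Fin d) → ℝ) : ℝ :=
  ((∫ x in Ω, ‖fderiv ℝ w x‖ ^ 2) + ω * ∫ x in Ω, (w x) ^ 2) /
    (∫ x in Ω, |w x| ^ (2 * σ + 2)) ^ (1 / (σ + 1))

/-- A classical solution of the constrained flow on the time interval `I`,
on the ball of radius `R`: smooth on an open neighbourhood of `I × closure Ω`,
vanishing on the lateral boundary, with positive `L^{2σ+2}` integral, satisfying
`∂ₜ u = Δu - ω u + μ[u] |u|^{2σ} u` on `Ω`. -/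
structure IsClassicalSolution (d : ℕ) (R σ ω : ℝ) (I : Set ℝ)
    (u : ℝ → EuclideanSpace ℝ (Fin d) → ℝ) : Prop where
  smooth : ∃ U : Set (ℝ × EuclideanSpace ℝ (Fin d)), IsOpen U ∧
      I ×ˢ closure (Om d R) ⊆ U ∧ ContDiffOn ℝ (⊤ : ℕ∞) (fun p => u p.1 p.2) U
  boundary : ∀ t ∈ I, ∀ x : EuclideanSpace ℝ (Fin d), ‖x‖ = R → u t x = 0
  posint : ∀ t ∈ I, 0 < ∫ x in Om d R, |u t x| ^ (2 * σ + 2)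
  flow : ∀ t ∈ I, ∀ x ∈ Om d R,
      deriv (fun s => u s x) t =
        lapl (u t) x - ω * u t x + muF (Om d R) σ ω (u t) * |u t x| ^ (2 * σ) * u t x

/-- The regularized nonlocal coefficient `μ_ε[w]`. -/
def muEps {d : ℕ} (Ω : Set (EuclideanSpace ℝ (Fin d))) (σ ω ε : ℝ)
    (w : EuclideanSpace ℝ (Fin d) → ℝ) : ℝ :=
  ((∫ x in Ω, ‖fderiv ℝ w x‖ ^ 2) + ω * ∫ x in Ω, (w x) ^ 2) /
    ((∫ x in Ω, |w x| ^ (2 * σ + 2)) + ε)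

/-- A classical solution of the ε-regularized flow on `[0,T]`. -/
structure IsEpsSolution (d : ℕ) (R σ ω ε T : ℝ)
    (u : ℝ → EuclideanSpace ℝ (Fin d) → ℝ) : Prop where
  smooth : ∃ U : Set (ℝ × EuclideanSpace ℝ (Fin d)), IsOpen U ∧
      (Set.Icc 0 T) ×ˢ closure (Om d R) ⊆ U ∧
      ContDiffOn ℝ (⊤ : ℕ∞) (fun p => u p.1 p.2) U
  boundary : ∀ t ∈ Set.Icc 0 T, ∀ x : EuclideanSpace ℝ (Fin d), ‖x‖ = R → u t x = 0
  flow : ∀ t ∈ Set.Icc 0 T, ∀ x ∈ Om d R,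
      deriv (fun s => u s x) t =
        lapl (u t) x - ω * u t x + muEps (Om d R) σ ω ε (u t) * |u t x| ^ (2 * σ) * u t x


open Metric Topology RealInnerProductSpace

theorem ContinuousOn.integrableOn_ball {X : Type*} [MetricSpace X] [ProperSpace X]
    [MeasurableSpace X] [OpensMeasurableSpace X] {μ : Measure X} [IsFiniteMeasureOnCompacts μ]
    {f : X → ℝ} {x : X} {r : ℝ} (hf : ContinuousOn f (closedBall x r)) :
    IntegrableOn f (ball x r) μ :=
  (hf.integrableOn_compact (isCompact_closedBall x r)).mono_set ball_subset_closedBall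

theorem ContinuousLinearMap.norm_sq_eq_sum_apply_single {ι : Type*} [Fintype ι] [DecidableEq ι]
    (L : EuclideanSpace ℝ ι →L[ℝ] ℝ) :
    ‖L‖ ^ 2 = ∑ i, L (EuclideanSpace.single i 1) ^ 2 := by
  set v := (InnerProductSpace.toDual ℝ (EuclideanSpace ℝ ι)).symm L
  have hL : ‖L‖ = ‖v‖ := ((InnerProductSpace.toDual ℝ _).symm.norm_map L).symm
  have hv (i : ι) : L (EuclideanSpace.single i 1) = v i := by
    simp [v, ← InnerProductSpace.toDual_symm_apply, EuclideanSpace.inner_single_right]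
  simp only [hL, EuclideanSpace.norm_sq_eq, hv, Real.norm_eq_abs, sq_abs]

section Calculus

variable {E F : Type*} [NormedAddCommGroup E] [NormedSpace ℝ E] [NormedAddCommGroup F]
  [NormedSpace ℝ F] {s : Set E} {x : E}

theorem ContDiffOn.hasFDerivAt_of_isOpen {f : E → F} (hf : ContDiffOn ℝ 1 f s) (hs : IsOpen s)
    (hx : x ∈ s) : HasFDerivAt f (fderiv ℝ f x) x :=
  ((hf.differentiableOn one_ne_zero x hx).differentiableAt (hs.mem_nhds hx)).hasFDerivAt

theorem ContDiffOn.continuousOn_fderiv_fderiv_apply {f : E → ℝ} (hf : ContDiffOn ℝ 2 f s)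
    (hs : IsOpen s) (v : E) :
    ContinuousOn (fun x => fderiv ℝ (fun y => fderiv ℝ f y v) x v) s :=
  (((hf.fderiv_of_isOpen hs le_rfl).clm_apply contDiffOn_const).continuousOn_fderiv_of_isOpen hs
    le_rfl).clm_apply continuousOn_const

theorem ContDiffOn.hasDerivAt_fst {f : ℝ × E → ℝ} {U : Set (ℝ × E)} (hf : ContDiffOn ℝ 1 f U)
    (hU : IsOpen U) {p : ℝ × E} (hp : p ∈ U) :
    HasDerivAt (fun t => f (t, p.2)) (fderiv ℝ f p (1, 0)) p.1 :=
  (hf.hasFDerivAt_of_isOpen hU hp).comp_hasDerivAt p.1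
    ((hasDerivAt_id p.1).prodMk (hasDerivAt_const p.1 p.2))

theorem ContDiffOn.continuousOn_deriv_fst {f : ℝ × E → ℝ} {U : Set (ℝ × E)}
    (hf : ContDiffOn ℝ 1 f U) (hU : IsOpen U) :
    ContinuousOn (fun p => deriv (fun t => f (t, p.2)) p.1) U :=
  ((hf.continuousOn_fderiv_of_isOpen hU le_rfl).clm_apply continuousOn_const).congr
    fun _ hp => (hf.hasDerivAt_fst hU hp).deriv

end Calculus

section Slicing

variable {F : Type*} [NormedAddCommGroup F] [InnerProductSpace ℝ F] {R : ℝ} {g G : F → ℝ}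

theorem integral_indicator_ball_comp_line_eq_zero (hR : 0 ≤ R) {e x₀ : F} (he : ‖e‖ = 1)
    (hx₀ : ⟪x₀, e⟫ = 0) (hG : ContinuousOn G (closedBall 0 R)) (hg : ∀ x, ‖x‖ = R → g x = 0)
    (hderiv : ∀ x ∈ closedBall 0 R, HasLineDerivAt ℝ g (G x) x e) :
    ∫ s : ℝ, (ball 0 R).indicator G (x₀ + s • e) = 0 := by
  set a := R ^ 2 - ‖x₀‖ ^ 2
  set γ : ℝ → F := fun s => x₀ + s • e
  have hnorm (s : ℝ) : ‖γ s‖ ^ 2 = s ^ 2 + ‖x₀‖ ^ 2 := by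
    rw [norm_add_sq_real, inner_smul_right, hx₀, norm_smul, he, Real.norm_eq_abs, mul_one, sq_abs]
    ring
  have hchord : (fun s => (ball 0 R).indicator G (γ s)) = (Ioo (-√a) √a).indicator (G ∘ γ) := by
    ext s
    have : γ s ∈ ball 0 R ↔ s ∈ Ioo (-√a) √a := by
      rw [mem_ball_zero_iff, mem_Ioo, ← Real.sq_lt, ← pow_lt_pow_iff_left₀ (norm_nonneg _) hR
        two_ne_zero, hnorm, lt_sub_iff_add_lt]
    simp only [indicator, this, Function.comp_apply]
  rw [hchord, integral_indicator measurableSet_Ioo]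
  rcases le_or_gt a 0 with ha | ha
  -- for `a ≤ 0` the chord `Ioo (-√a) √a` is empty, as `√a = 0`
  · simp [Real.sqrt_eq_zero'.mpr ha]
  have hγ (s : ℝ) (hs : s ∈ uIcc (-√a) √a) : γ s ∈ closedBall 0 R := by
    rw [mem_closedBall_zero_iff, ← pow_le_pow_iff_left₀ (norm_nonneg _) hR two_ne_zero, hnorm,
      ← le_sub_iff_add_le, Real.sq_le ha.le]
    rwa [uIcc_of_le (by simp)] at hs
  have hγ_deriv (s : ℝ) (hs : s ∈ uIcc (-√a) √a) : HasDerivAt (g ∘ γ) ((G ∘ γ) s) s := by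
    have h := HasDerivAt.comp_sub_const s s (by rw [sub_self]; exact hderiv _ (hγ s hs))
    have hγ_shift : g ∘ γ = fun r => g (γ s + (r - s) • e) := by
      ext r
      simp only [γ, Function.comp_apply, sub_smul]
      congr 1
      abel
    rwa [hγ_shift]
  have hγ_sphere (s : ℝ) (hs : s ^ 2 = a) : ‖γ s‖ = R := by
    rw [← pow_left_inj₀ (norm_nonneg _) hR two_ne_zero, hnorm, hs, sub_add_cancel]
  have hcont : ContinuousOn (G ∘ γ) (uIcc (-√a) √a) :=
    hG.comp (by fun_prop) fun s hs => hγ s hs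
  rw [integral_Ioc_eq_integral_Ioo.symm, ← intervalIntegral.integral_of_le (by simp),
    intervalIntegral.integral_eq_sub_of_hasDerivAt hγ_deriv hcont.intervalIntegrable,
    Function.comp_apply, Function.comp_apply, hg _ (hγ_sphere _ (Real.sq_sqrt ha.le)),
    hg _ (hγ_sphere _ (by rw [neg_sq, Real.sq_sqrt ha.le])), sub_zero]

theorem setIntegral_ball_eq_zero_of_hasLineDerivAt {d : ℕ} (hR : 0 ≤ R) (i : Fin d)
    {g G : EuclideanSpace ℝ (Fin d) → ℝ} (hG : ContinuousOn G (closedBall 0 R))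
    (hg : ∀ x, ‖x‖ = R → g x = 0)
    (hderiv : ∀ x ∈ closedBall 0 R, HasLineDerivAt ℝ g (G x) x (EuclideanSpace.single i 1)) :
    ∫ x in ball 0 R, G x = 0 := by
  obtain ⟨n, rfl⟩ := Nat.exists_eq_add_one_of_ne_zero i.pos.ne'
  let Φ : ℝ × (Fin n → ℝ) ≃ᵐ EuclideanSpace ℝ (Fin (n + 1)) :=
    (MeasurableEquiv.piFinSuccAbove (fun _ => ℝ) i).symm.trans (MeasurableEquiv.toLp 2 _)
  have hΦ : MeasurePreserving Φ :=
    (PiLp.volume_preserving_toLp _).comp (volume_preserving_piFinSuccAbove _ i).symm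
  have hline (s : ℝ) (y : Fin n → ℝ) : Φ (s, y) = Φ (0, y) + s • EuclideanSpace.single i 1 := by
    ext j
    rcases Fin.eq_self_or_eq_succAbove i j with rfl | ⟨k, rfl⟩ <;> simp [Φ]
  have hperp (y : Fin n → ℝ) : ⟪Φ (0, y), EuclideanSpace.single i 1⟫ = 0 := by
    simp [Φ, EuclideanSpace.inner_single_right]
  have hint : Integrable ((ball 0 R).indicator G) :=
    (integrable_indicator_iff measurableSet_ball).mpr hG.integrableOn_ball
  rw [← integral_indicator measurableSet_ball, ← hΦ.integral_comp', Measure.volume_eq_prod,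
    integral_prod_symm (fun z => (ball 0 R).indicator G (Φ z))
      ((hΦ.integrable_comp_emb Φ.measurableEmbedding).mpr hint)]
  refine integral_eq_zero_of_ae (ae_of_all _ fun y => ?_)
  show ∫ s, (ball 0 R).indicator G (Φ (s, y)) = 0
  rw [funext fun s => congrArg ((ball 0 R).indicator G) (hline s y)]
  exact integral_indicator_ball_comp_line_eq_zero hR (by simp) (hperp y) hG hg hderiv

end Slicing

section Green

variable {d : ℕ} {R : ℝ} {V : Set (EuclideanSpace ℝ (Fin d))} {w : EuclideanSpace ℝ (Fin d) → ℝ}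

theorem ContDiffOn.continuousOn_lapl (hw : ContDiffOn ℝ 2 w V) (hV : IsOpen V) :
    ContinuousOn (lapl w) V :=
  continuousOn_finsetSum _ fun _ _ => hw.continuousOn_fderiv_fderiv_apply hV _

theorem setIntegral_ball_sq_fderiv_add_mul_fderiv_fderiv (hR : 0 ≤ R) (hV : IsOpen V)
    (hRV : closedBall 0 R ⊆ V) (hw : ContDiffOn ℝ 2 w V) (hw0 : ∀ x, ‖x‖ = R → w x = 0)
    (i : Fin d) :
    ∫ x in ball 0 R, (fderiv ℝ w x (EuclideanSpace.single i 1) ^ 2 + w x *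
      fderiv ℝ (fun y => fderiv ℝ w y (EuclideanSpace.single i 1)) x (EuclideanSpace.single i 1))
      = 0 := by
  set p := fun y => fderiv ℝ w y (EuclideanSpace.single i 1)
  have hp : ContDiffOn ℝ 1 p V := (hw.fderiv_of_isOpen hV le_rfl).clm_apply contDiffOn_const
  refine setIntegral_ball_eq_zero_of_hasLineDerivAt hR i (g := w * p)
    (((hp.continuousOn.pow 2).add (hw.continuousOn.mul
      (hw.continuousOn_fderiv_fderiv_apply hV _))).mono hRV)
    (fun x hx => by simp [hw0 x hx]) fun x hx => ?_
  have h := (((hw.of_le one_le_two).hasFDerivAt_of_isOpen hV (hRV hx)).mul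
    (hp.hasFDerivAt_of_isOpen hV (hRV hx))).hasLineDerivAt (EuclideanSpace.single i 1)
  rwa [add_apply, smul_apply, smul_apply, smul_eq_mul, smul_eq_mul, mul_comm (p x), ← sq,
    add_comm] at h

theorem setIntegral_ball_mul_lapl (hR : 0 ≤ R) (hV : IsOpen V) (hRV : closedBall 0 R ⊆ V)
    (hw : ContDiffOn ℝ 2 w V) (hw0 : ∀ x, ‖x‖ = R → w x = 0) :
    ∫ x in ball 0 R, w x * lapl w x = -∫ x in ball 0 R, ‖fderiv ℝ w x‖ ^ 2 := by
  set e : Fin d → EuclideanSpace ℝ (Fin d) := fun i => EuclideanSpace.single i 1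
  have hsum (x) : w x * lapl w x + ‖fderiv ℝ w x‖ ^ 2 =
      ∑ i, (fderiv ℝ w x (e i) ^ 2 + w x * fderiv ℝ (fun y => fderiv ℝ w y (e i)) x (e i)) := by
    rw [ContinuousLinearMap.norm_sq_eq_sum_apply_single, lapl, Finset.mul_sum,
      ← Finset.sum_add_distrib]
    exact Finset.sum_congr rfl fun i _ => add_comm _ _
  have hDw : ContinuousOn (fderiv ℝ w) V := hw.continuousOn_fderiv_of_isOpen hV one_le_two
  have hterm (i : Fin d) : IntegrableOn (fun x => fderiv ℝ w x (e i) ^ 2 +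
      w x * fderiv ℝ (fun y => fderiv ℝ w y (e i)) x (e i)) (ball 0 R) :=
    ((((hDw.clm_apply continuousOn_const).pow 2).add
      (hw.continuousOn.mul (hw.continuousOn_fderiv_fderiv_apply hV _))).mono hRV).integrableOn_ball
  have hzero : ∫ x in ball 0 R, (w x * lapl w x + ‖fderiv ℝ w x‖ ^ 2) = 0 := by
    rw [funext hsum, integral_finsetSum _ fun i _ => hterm i]
    exact Finset.sum_eq_zero fun i _ =>
      setIntegral_ball_sq_fderiv_add_mul_fderiv_fderiv hR hV hRV hw hw0 i
  have hlap : IntegrableOn (fun x => w x * lapl w x) (ball 0 R) :=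
    ((hw.continuousOn.mul (hw.continuousOn_lapl hV)).mono hRV).integrableOn_ball
  have hgrad : IntegrableOn (fun x => ‖fderiv ℝ w x‖ ^ 2) (ball 0 R) :=
    ((hDw.norm.pow 2).mono hRV).integrableOn_ball
  rw [integral_add hlap hgrad] at hzero
  linarith

end Green

section ParametricIntegral

variable {E : Type*} [TopologicalSpace E] {U : Set (ℝ × E)} {K s : Set E} {t₀ : ℝ}
  {F F' : ℝ × E → ℝ}

theorem ContinuousOn.exists_bound_closedBall_prod (hF : ContinuousOn F U) (hU : IsOpen U)
    (hK : IsCompact K) (hKU : {t₀} ×ˢ K ⊆ U) :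
    ∃ δ > 0, closedBall t₀ δ ×ˢ K ⊆ U ∧ ∃ C, ∀ p ∈ closedBall t₀ δ ×ˢ K, ‖F p‖ ≤ C := by
  obtain ⟨I, W, hI, -, hIt₀, hKW, hIW⟩ := generalized_tube_lemma isCompact_singleton hK hU hKU
  obtain ⟨δ, hδ, hδI⟩ := Metric.isOpen_iff.mp hI t₀ (hIt₀ rfl)
  have hsub : closedBall t₀ (δ / 2) ×ˢ K ⊆ U :=
    (prod_mono ((closedBall_subset_ball (half_lt_self hδ)).trans hδI) hKW).trans hIW
  exact ⟨δ / 2, half_pos hδ, hsub,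
    ((isCompact_closedBall t₀ _).prod hK).exists_bound_of_continuousOn (hF.mono hsub)⟩

variable [MeasurableSpace E] [OpensMeasurableSpace E] (μ : Measure E) [IsFiniteMeasureOnCompacts μ]

theorem continuousAt_setIntegral_of_continuousOn (hF : ContinuousOn F U) (hU : IsOpen U)
    (hs : MeasurableSet s) (hK : IsCompact (closure s)) (hKU : {t₀} ×ˢ closure s ⊆ U) :
    ContinuousAt (fun t => ∫ x in s, F (t, x) ∂μ) t₀ := by
  obtain ⟨δ, hδ, hδU, C, hC⟩ := hF.exists_bound_closedBall_prod hU hK hKU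
  have hslice {t} (ht : t ∈ closedBall t₀ δ) : ContinuousOn (fun x => F (t, x)) s :=
    hF.comp (by fun_prop) fun x hx => hδU ⟨ht, subset_closure hx⟩
  have hnhds : closedBall t₀ δ ∈ 𝓝 t₀ := closedBall_mem_nhds t₀ hδ
  refine continuousAt_of_dominated (bound := fun _ => C) ?_ ?_ ?_ ?_
  · filter_upwards [hnhds] with t ht using (hslice ht).aestronglyMeasurable hs
  · filter_upwards [hnhds] with t ht
    exact (ae_restrict_iff' hs).mpr (ae_of_all _ fun x hx => hC _ ⟨ht, subset_closure hx⟩)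
  · exact integrableOn_const ((measure_mono subset_closure).trans_lt hK.measure_lt_top).ne
  · refine (ae_restrict_iff' hs).mpr (ae_of_all _ fun x hx => ?_)
    have hmem : (t₀, x) ∈ U := hδU ⟨mem_closedBall_self hδ.le, subset_closure hx⟩
    exact ((hF _ hmem).continuousAt (hU.mem_nhds hmem)).comp (f := fun t => (t, x)) (by fun_prop)

theorem hasDerivAt_setIntegral_of_hasDerivAt_fst [T2Space E] (hF : ContinuousOn F U)
    (hF' : ContinuousOn F' U) (hU : IsOpen U)
    (hderiv : ∀ p ∈ U, HasDerivAt (fun t => F (t, p.2)) (F' p) p.1)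
    (hs : MeasurableSet s) (hK : IsCompact (closure s)) (hKU : {t₀} ×ˢ closure s ⊆ U) :
    HasDerivAt (fun t => ∫ x in s, F (t, x) ∂μ) (∫ x in s, F' (t₀, x) ∂μ) t₀ := by
  obtain ⟨δ, hδ, hδU, C, hC⟩ := hF'.exists_bound_closedBall_prod hU hK hKU
  have hmem {t x} (ht : t ∈ closedBall t₀ δ) (hx : x ∈ s) : (t, x) ∈ U :=
    hδU ⟨ht, subset_closure hx⟩
  have ht₀ : t₀ ∈ closedBall t₀ δ := mem_closedBall_self hδ.le
  have hslice {G : ℝ × E → ℝ} (hG : ContinuousOn G U) {t} (ht : t ∈ closedBall t₀ δ) :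
      ContinuousOn (fun x => G (t, x)) (closure s) :=
    hG.comp (by fun_prop) fun x hx => hδU ⟨ht, hx⟩
  have hfin : μ s < ⊤ := (measure_mono subset_closure).trans_lt hK.measure_lt_top
  refine (hasDerivAt_integral_of_dominated_loc_of_deriv_le (bound := fun _ => C)
    (F := fun t x => F (t, x)) (F' := fun t x => F' (t, x)) (closedBall_mem_nhds t₀ hδ) ?_
    (((hslice hF ht₀).integrableOn_compact hK).mono_set subset_closure)
    (((hslice hF' ht₀).mono subset_closure).aestronglyMeasurable hs) ?_
    (integrableOn_const hfin.ne) ?_).2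
  · filter_upwards [closedBall_mem_nhds t₀ hδ] with t ht
    exact ((hslice hF ht).mono subset_closure).aestronglyMeasurable hs
  · exact (ae_restrict_iff' hs).mpr (ae_of_all _ fun x hx t ht => hC _ ⟨ht, subset_closure hx⟩)
  · exact (ae_restrict_iff' hs).mpr (ae_of_all _ fun x hx t ht => hderiv _ (hmem ht hx))

end ParametricIntegral

theorem ContDiffOn.hasDerivAt_setIntegral {E : Type*} [NormedAddCommGroup E] [NormedSpace ℝ E]
    [MeasurableSpace E] [OpensMeasurableSpace E] (μ : Measure E) [IsFiniteMeasureOnCompacts μ]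
    {F : ℝ × E → ℝ} {U : Set (ℝ × E)} {s : Set E} {t₀ : ℝ} (hF : ContDiffOn ℝ 1 F U)
    (hU : IsOpen U) (hs : MeasurableSet s) (hK : IsCompact (closure s))
    (hKU : {t₀} ×ˢ closure s ⊆ U) :
    HasDerivAt (fun t => ∫ x in s, F (t, x) ∂μ) (∫ x in s, deriv (fun t => F (t, x)) t₀ ∂μ) t₀ :=
  hasDerivAt_setIntegral_of_hasDerivAt_fst μ hF.continuousOn (hF.continuousOn_deriv_fst hU) hU
    (fun _ hp => (hF.hasDerivAt_fst hU hp).differentiableAt.hasDerivAt) hs hK hKU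

section RegularizedFlow

variable {d : ℕ} {R σ ω ε : ℝ} {V : Set (EuclideanSpace ℝ (Fin d))}
  {w : EuclideanSpace ℝ (Fin d) → ℝ}

theorem abs_rpow_add_two (a : ℝ) {p : ℝ} (hp : p + 2 ≠ 0) : |a| ^ (p + 2) = |a| ^ p * a ^ 2 := by
  rw [Real.rpow_add' (abs_nonneg a) hp, Real.rpow_two, sq_abs]

theorem setIntegral_ball_mul_regularizedFlow (hR : 0 ≤ R) (hσ : -1 < σ) (hε : 0 < ε)
    (hV : IsOpen V) (hRV : closedBall 0 R ⊆ V) (hw : ContDiffOn ℝ 2 w V)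
    (hw0 : ∀ x, ‖x‖ = R → w x = 0) :
    ∫ x in Om d R, w x * (lapl w x - ω * w x + muEps (Om d R) σ ω ε w * |w x| ^ (2 * σ) * w x) =
      -ε * muEps (Om d R) σ ω ε w := by
  set μ := muEps (Om d R) σ ω ε w
  have hμ : μ * ((∫ x in Om d R, |w x| ^ (2 * σ + 2)) + ε) =
      (∫ x in Om d R, ‖fderiv ℝ w x‖ ^ 2) + ω * ∫ x in Om d R, w x ^ 2 :=
    div_mul_cancel₀ _ (by positivity)
  have hpt (x) : w x * (lapl w x - ω * w x + μ * |w x| ^ (2 * σ) * w x) =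
      w x * lapl w x - ω * w x ^ 2 + μ * |w x| ^ (2 * σ + 2) := by
    rw [abs_rpow_add_two _ (by linarith)]
    ring
  have hw' : ContinuousOn w (closedBall 0 R) := hw.continuousOn.mono hRV
  have hlap : IntegrableOn (fun x => w x * lapl w x) (Om d R) :=
    ((hw.continuousOn.mul (hw.continuousOn_lapl hV)).mono hRV).integrableOn_ball
  have hsq : IntegrableOn (fun x => ω * w x ^ 2) (Om d R) :=
    (continuousOn_const.mul (hw'.pow 2)).integrableOn_ball
  have hpow : IntegrableOn (fun x => μ * |w x| ^ (2 * σ + 2)) (Om d R) :=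
    (continuousOn_const.mul (hw'.abs.rpow_const fun _ _ => Or.inr (by linarith))).integrableOn_ball
  have hgreen : ∫ x in Om d R, w x * lapl w x = -∫ x in Om d R, ‖fderiv ℝ w x‖ ^ 2 :=
    setIntegral_ball_mul_lapl hR hV hRV hw hw0
  simp only [hpt]
  rw [integral_add (f := fun x => w x * lapl w x - ω * w x ^ 2) (by exact hlap.sub hsq) hpow,
    integral_sub hlap hsq, integral_const_mul, integral_const_mul, hgreen]
  linear_combination hμ

theorem IsEpsSolution.setIntegral_deriv_sq {T : ℝ} {u : ℝ → EuclideanSpace ℝ (Fin d) → ℝ}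
    (hu : IsEpsSolution d R σ ω ε T u) (hR : 0 < R) (hσ : -1 < σ) (hε : 0 < ε) {s : ℝ}
    (hs : s ∈ Icc 0 T) :
    ∫ x in Om d R, deriv (fun r => u r x ^ 2) s = -(2 * ε) * muEps (Om d R) σ ω ε (u s) := by
  obtain ⟨U, hU, hUsub, hu_smooth⟩ := hu.smooth
  have hū : ContDiffOn ℝ 2 (fun p : ℝ × _ => u p.1 p.2) U :=
    hu_smooth.of_le (WithTop.coe_le_coe.mpr le_top)
  have hRV : closedBall 0 R ⊆ {x | (s, x) ∈ U} := fun x hx =>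
    hUsub ⟨hs, show x ∈ closure (ball 0 R) by rwa [closure_ball _ hR.ne']⟩
  calc ∫ x in Om d R, deriv (fun r => u r x ^ 2) s
      = ∫ x in Om d R, 2 * (u s x * (lapl (u s) x - ω * u s x +
          muEps (Om d R) σ ω ε (u s) * |u s x| ^ (2 * σ) * u s x)) := by
        refine setIntegral_congr_fun measurableSet_ball fun x hx => ?_
        have hdiff : DifferentiableAt ℝ (fun r => u r x) s :=
          ((hū.of_le one_le_two).hasDerivAt_fst hU
            (hRV (ball_subset_closedBall hx))).differentiableAt
        rw [deriv_fun_pow hdiff, ← hu.flow s hs x hx]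
        ring
    _ = -(2 * ε) * muEps (Om d R) σ ω ε (u s) := by
        rw [integral_const_mul, setIntegral_ball_mul_regularizedFlow (ω := ω) (w := u s) hR.le hσ
          hε (hU.preimage (by fun_prop)) hRV
          (hū.comp (f := fun x => (s, x)) (by fun_prop) fun _ hx => hx) (hu.boundary s hs)]
        ring

end RegularizedFlow

theorem mass_identity_regularized_general {d : ℕ} (R : ℝ) (hR : 0 < R)
    (σ ω ε T : ℝ) (hσ : 0 < σ)
    (hε : 0 < ε)
    (u : ℝ → EuclideanSpace ℝ (Fin d) → ℝ)
    (hu : IsEpsSolution d R σ ω ε T u) :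
    ∀ t ∈ Set.Icc (0 : ℝ) T,
      ∫ x in Om d R, (u t x) ^ 2 =
        (∫ x in Om d R, (u 0 x) ^ 2) - 2 * ε * ∫ s in (0 : ℝ)..t, muEps (Om d R) σ ω ε (u s) := by
  obtain ⟨U, hU, hUsub, hu_smooth⟩ := hu.smooth
  have hsq : ContDiffOn ℝ 1 (fun p : ℝ × _ => u p.1 p.2 ^ 2) U :=
    (hu_smooth.of_le (WithTop.coe_le_coe.mpr le_top)).pow 2
  have hK : IsCompact (closure (Om d R)) := isBounded_ball.isCompact_closure
  intro t ht
  have hIcc : uIcc 0 t ⊆ Icc 0 T := uIcc_subset_Icc ⟨le_rfl, ht.1.trans ht.2⟩ ht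
  have hslab {s} (hs : s ∈ uIcc 0 t) : {s} ×ˢ closure (Om d R) ⊆ U :=
    (prod_mono (singleton_subset_iff.mpr (hIcc hs)) le_rfl).trans hUsub
  have hftc : ∫ s in 0..t, ∫ x in Om d R, deriv (fun r => u r x ^ 2) s =
      (∫ x in Om d R, u t x ^ 2) - ∫ x in Om d R, u 0 x ^ 2 :=
    intervalIntegral.integral_eq_sub_of_hasDerivAt
      (fun s hs => hsq.hasDerivAt_setIntegral volume hU measurableSet_ball hK (hslab hs))
      (ContinuousOn.intervalIntegrable fun s hs => (continuousAt_setIntegral_of_continuousOn volume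
        (hsq.continuousOn_deriv_fst hU) hU measurableSet_ball hK (hslab hs)).continuousWithinAt)
  rw [intervalIntegral.integral_congr fun s hs => hu.setIntegral_deriv_sq hR (by linarith) hε
    (hIcc hs), intervalIntegral.integral_const_mul] at hftc
  linarith

/-- mass identity for the ε-regularized flow. -/
theorem mass_identity_regularized {d : ℕ} (hd : 1 ≤ d) (R : ℝ) (hR : 0 < R)
    (σ ω ε T : ℝ) (hσ : 0 < σ) (hσd : 3 ≤ d → σ < 2 / ((d : ℝ) - 2))
    (hε : 0 < ε) (hT : 0 ≤ T)
    (u : ℝ → EuclideanSpace ℝ (Fin d) → ℝ)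
    (hu : IsEpsSolution d R σ ω ε T u) :
    ∀ t ∈ Set.Icc (0 : ℝ) T,
      ∫ x in Om d R, (u t x) ^ 2 =
        (∫ x in Om d R, (u 0 x) ^ 2) - 2 * ε * ∫ s in (0 : ℝ)..t, muEps (Om d R) σ ω ε (u s) :=
  mass_identity_regularized_general R hR σ ω ε T hσ hε u hu
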